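/- arXiv:math/0411327 — 2 statements merged into one kernel-verified Lean document; each statement's English description precedes it below -/
import Mathlib

section
/- Let f: N → N' be a smooth map between Riemannian manifolds, φ: M → N smooth, φ' = f∘φ, and ψ' = f_*ψ for a section ψ of ΣM ⊗ φ⁻¹TN. Then the Dirac operators D̸ and D̸' along φ and φ' satisfy D̸'ψ' = f_*(D̸ψ) + 𝒜(dφ(e_α), e_α·ψ), where 𝒜(dφ(e_α), e_α·ψ) := (∇φ^i·ψ^j) ⊗ A(∂_{y^i}, ∂_{y^j}) and A(X,Y) := (∇_X df)(Y) is the second fundamental form of f. -/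
noncomputable section

open MeasureTheory Complex Filter
open scoped ENNReal NNReal

/-- The spinor fiber over a two-dimensional flat (spin) domain. -/
abbrev Spinor : Type := ℂ × ℂ

/-- Clifford multiplication of a vector of `ℝ²` on a spinor; it satisfies
`cl v (cl v s) = -‖v‖² • s` and the skew-adjointness relation
`⟨cl v s, t⟩ = -⟨s, cl v t⟩`. -/
def cl (v : ℝ × ℝ) (s : Spinor) : Spinor :=
  v.1 • ((-s.2 : ℂ), s.1) + v.2 • (Complex.I * s.2, Complex.I * s.1)

/-- The (real) inner product `⟨·,·⟩_{ΣM}` on spinors. -/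
def sInner (s t : Spinor) : ℝ :=
  (s.1 * (starRingEnd ℂ) t.1 + s.2 * (starRingEnd ℂ) t.2).re

/-- Partial derivative in the `x`-direction. -/
def pdx {E : Type*} [NormedAddCommGroup E] [NormedSpace ℝ E] (f : ℝ × ℝ → E) (p : ℝ × ℝ) : E :=
  fderiv ℝ f p (1, 0)

/-- Partial derivative in the `y`-direction. -/
def pdy {E : Type*} [NormedAddCommGroup E] [NormedSpace ℝ E] (f : ℝ × ℝ → E) (p : ℝ × ℝ) : E :=
  fderiv ℝ f p (0, 1)

/-- The (flat) Laplacian `Δ = ∂²/∂x² + ∂²/∂y²`. -/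
def lap {E : Type*} [NormedAddCommGroup E] [NormedSpace ℝ E] (f : ℝ × ℝ → E) (p : ℝ × ℝ) : E :=
  pdx (fun q => pdx f q) p + pdy (fun q => pdy f q) p

/-- The gradient of a real valued function on `ℝ²`. -/
def gradc (f : ℝ × ℝ → ℝ) (p : ℝ × ℝ) : ℝ × ℝ := (pdx f p, pdy f p)

/-- The flat Dirac operator `∂̸ = e₁·∇_{e₁} + e₂·∇_{e₂}` on spinors on `ℝ²`. -/
def diracOp (ψ : ℝ × ℝ → Spinor) (p : ℝ × ℝ) : Spinor :=
  cl (1, 0) (pdx ψ p) + cl (0, 1) (pdy ψ p)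

/-- The energy density `|dφ|²` of a map `φ` with values in `ℝ^K`. -/
def eDen {K : ℕ} (φ : ℝ × ℝ → Fin K → ℝ) (p : ℝ × ℝ) : ℝ :=
  ∑ i, ((pdx (fun q => φ q i) p) ^ 2 + (pdy (fun q => φ q i) p) ^ 2)

/-- The pointwise squared norm `|ψ|²` of a spinor field with values in `ΣM ⊗ ℝ^K`. -/
def psiSq {K : ℕ} (ψ : ℝ × ℝ → Fin K → Spinor) (p : ℝ × ℝ) : ℝ :=
  ∑ i, sInner (ψ p i) (ψ p i)

/-- Partial derivative in the `j`-th coordinate direction on a chart of a target manifold. -/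
def pdN {n : ℕ} (h : (Fin n → ℝ) → ℝ) (y : Fin n → ℝ) (j : Fin n) : ℝ :=
  fderiv ℝ h y (Pi.single j 1)

/-- The Dirac operator along a map `φ`:
`D̸ψ^i = ∂̸ψ^i + Γ^i_{jk}(φ) ∂_α φ^j (e_α ⋅ ψ^k)`, expressed through connection
coefficients `Γ` on the target. -/
def diracAlong {n : ℕ} (Γ : (Fin n → ℝ) → Fin n → Fin n → Fin n → ℝ)
    (φ : ℝ × ℝ → Fin n → ℝ) (ψ : ℝ × ℝ → Fin n → Spinor) (i : Fin n) (p : ℝ × ℝ) : Spinor :=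
  diracOp (fun q => ψ q i) p +
    ∑ j, ∑ k, Γ (φ p) i j k • cl (gradc (fun q => φ q j) p) (ψ p k)

/-- `∂f^a/∂y^i`, the differential of a map `f` between charts of `N` and `N'`. -/
def pdmap {n n' : ℕ} (f : (Fin n → ℝ) → Fin n' → ℝ) (y : Fin n → ℝ) (a : Fin n') (i : Fin n) : ℝ :=
  fderiv ℝ (fun z => f z a) y (Pi.single i 1)

/-- The second fundamental form `A(X,Y) = (∇_X df)(Y)` of a map `f : N → N'`, evaluated on
the coordinate vector fields: `A(∂_{y^i}, ∂_{y^j})^a`, for connection coefficients `Γ` on `N`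
and `Γ'` on `N'`. -/
def sff {n n' : ℕ} (Γ : (Fin n → ℝ) → Fin n → Fin n → Fin n → ℝ)
    (Γ' : (Fin n' → ℝ) → Fin n' → Fin n' → Fin n' → ℝ)
    (f : (Fin n → ℝ) → Fin n' → ℝ) (y : Fin n → ℝ) (i j : Fin n) (a : Fin n') : ℝ :=
  pdN (fun z => pdmap f z a j) y i +
    (∑ b, ∑ c, Γ' (f y) a b c * pdmap f y b i * pdmap f y c j) -
    ∑ k, Γ y k i j * pdmap f y a k


/-! ### Auxiliary lemmas -/

lemma cl_add' (v : ℝ × ℝ) (s t : Spinor) : cl v (s + t) = cl v s + cl v t := by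
  simp only [cl, Prod.fst_add, Prod.snd_add, Prod.ext_iff, Prod.smul_mk, Prod.mk_add_mk]
  constructor <;> ring_nf <;> simp [smul_add, mul_add] <;> ring

lemma cl_smul' (v : ℝ × ℝ) (r : ℝ) (s : Spinor) : cl v (r • s) = r • cl v s := by
  simp only [cl, Prod.smul_fst, Prod.smul_snd, Prod.ext_iff, Prod.smul_mk, Prod.mk_add_mk]
  constructor <;> simp [smul_smul, mul_comm, smul_add, mul_add, Complex.real_smul] <;> ring

lemma cl_zero' (v : ℝ × ℝ) : cl v 0 = 0 := by
  simp [cl]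

lemma cl_sum' {ι : Type*} (u : Finset ι) (v : ℝ × ℝ) (g : ι → Spinor) :
    cl v (∑ j ∈ u, g j) = ∑ j ∈ u, cl v (g j) := by
  induction u using Finset.cons_induction with
  | empty => simp [cl_zero']
  | cons x u hx ih => simp [Finset.sum_cons, cl_add', ih]

lemma cl_decomp (v : ℝ × ℝ) (s : Spinor) :
    cl v s = v.1 • cl (1, 0) s + v.2 • cl (0, 1) s := by
  simp [cl, Prod.ext_iff, smul_add]

lemma chain_coord {n : ℕ} (φ : ℝ × ℝ → Fin n → ℝ) (hφ : Differentiable ℝ φ)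
    (g : (Fin n → ℝ) → ℝ) (p : ℝ × ℝ) (hg : DifferentiableAt ℝ g (φ p)) (v : ℝ × ℝ) :
    fderiv ℝ (fun q => g (φ q)) p v =
      ∑ i, fderiv ℝ (fun q => φ q i) p v * fderiv ℝ g (φ p) (Pi.single i 1) := by
  have h1 : fderiv ℝ (fun q => g (φ q)) p v = fderiv ℝ g (φ p) (fderiv ℝ φ p v) := by
    rw [show (fun q => g (φ q)) = g ∘ φ from rfl, fderiv_comp p hg (hφ p)]
    rfl
  have h2 : ∀ i, fderiv ℝ (fun q => φ q i) p v = fderiv ℝ φ p v i := by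
    intro i
    have : (fun q => φ q i)
        = (ContinuousLinearMap.proj (R := ℝ) (φ := fun _ : Fin n => ℝ) i) ∘ φ := rfl
    rw [this, fderiv_comp p (ContinuousLinearMap.proj i).differentiableAt (hφ p)]
    simp
  rw [h1]
  conv_lhs => rw [show (fderiv ℝ φ p v) = ∑ i, Pi.single i (fderiv ℝ φ p v i) from
    (Finset.univ_sum_single _).symm]
  rw [map_sum]
  refine Finset.sum_congr rfl fun i _ => ?_
  have h3 : (Pi.single i (fderiv ℝ φ p v i) : Fin n → ℝ)
      = fderiv ℝ φ p v i • (Pi.single i 1 : Fin n → ℝ) := by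
    rw [← Pi.single_smul]
    simp
  rw [h2, h3, _root_.map_smul]
  simp [smul_eq_mul]

lemma sum3_comm {α β γ M : Type*} [Fintype α] [Fintype β] [Fintype γ] [AddCommMonoid M]
    (A : α → β → γ → M) :
    ∑ x, ∑ y, ∑ z, A x y z = ∑ y, ∑ z, ∑ x, A x y z := by
  rw [Finset.sum_comm]
  exact Finset.sum_congr rfl fun y _ => Finset.sum_comm

lemma sum4_comm {α β γ δ M : Type*} [Fintype α] [Fintype β] [Fintype γ] [Fintype δ]
    [AddCommMonoid M] (A : α → β → γ → δ → M) :
    ∑ b, ∑ c, ∑ i, ∑ j, A b c i j = ∑ i, ∑ j, ∑ b, ∑ c, A b c i j := by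
  calc ∑ b, ∑ c, ∑ i, ∑ j, A b c i j
      = ∑ b, ∑ i, ∑ c, ∑ j, A b c i j :=
        Finset.sum_congr rfl fun b _ => Finset.sum_comm
    _ = ∑ i, ∑ b, ∑ c, ∑ j, A b c i j := Finset.sum_comm
    _ = ∑ i, ∑ b, ∑ j, ∑ c, A b c i j :=
        Finset.sum_congr rfl fun i _ => Finset.sum_congr rfl fun b _ => Finset.sum_comm
    _ = ∑ i, ∑ j, ∑ b, ∑ c, A b c i j :=
        Finset.sum_congr rfl fun i _ => Finset.sum_comm

/-- **Transformation of the Dirac operator along a map under `f : N → N'`.**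
For a smooth map `f : N → N'`, a smooth map `φ : M → N` with `φ' = f ∘ φ`, and a spinor
field `ψ` along `φ` with push-forward `ψ' = f_*ψ` (i.e. `ψ'^a = ∂f^a/∂y^j (φ) ψ^j`),
the Dirac operators `D̸` along `φ` and `D̸'` along `φ'` satisfy
`D̸'ψ' = f_*(D̸ψ) + 𝒜(dφ(e_α), e_α·ψ)`, where
`𝒜(dφ(e_α), e_α·ψ) = (∇φ^i·ψ^j) ⊗ A(∂_{y^i}, ∂_{y^j})`
and `A = (∇ df)` is the second fundamental form of `f`. -/
theorem dirac_along_composition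
    {n n' : ℕ}
    (Γ : (Fin n → ℝ) → Fin n → Fin n → Fin n → ℝ)
    (Γ' : (Fin n' → ℝ) → Fin n' → Fin n' → Fin n' → ℝ)
    (hΓ : ContDiff ℝ (⊤ : ℕ∞) fun y => Γ y) (hΓ' : ContDiff ℝ (⊤ : ℕ∞) fun y => Γ' y)
    (f : (Fin n → ℝ) → Fin n' → ℝ) (hf : ContDiff ℝ (⊤ : ℕ∞) f)
    (φ : ℝ × ℝ → Fin n → ℝ) (hφ : ContDiff ℝ (⊤ : ℕ∞) φ)
    (ψ : ℝ × ℝ → Fin n → Spinor) (hψ : ContDiff ℝ (⊤ : ℕ∞) ψ)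
    (φ' : ℝ × ℝ → Fin n' → ℝ) (hφ' : φ' = fun p => f (φ p))
    (ψ' : ℝ × ℝ → Fin n' → Spinor)
    (hψ' : ψ' = fun p a => ∑ j, pdmap f (φ p) a j • ψ p j) :
    ∀ (p : ℝ × ℝ) (a : Fin n'),
      diracAlong Γ' φ' ψ' a p =
        (∑ j, pdmap f (φ p) a j • diracAlong Γ φ ψ j p) +
        ∑ i, ∑ j, sff Γ Γ' f (φ p) i j a • cl (gradc (fun q => φ q i) p) (ψ p j) := by
  subst hφ' hψ'
  intro p a
  have hφd : Differentiable ℝ φ := hφ.differentiable (by simp)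
  have hψd : Differentiable ℝ ψ := hψ.differentiable (by simp)
  have hψdi : ∀ j, Differentiable ℝ fun q => ψ q j := fun j => differentiable_pi.mp hψd j
  have hfa : ∀ b : Fin n', ContDiff ℝ (⊤ : ℕ∞) fun z => f z b := fun b => contDiff_pi.mp hf b
  have hfad : ∀ b, DifferentiableAt ℝ (fun z => f z b) (φ p) :=
    fun b => ((hfa b).differentiable (by simp)) (φ p)
  have hg : ∀ (b : Fin n') (j : Fin n), ContDiff ℝ (⊤ : ℕ∞) fun z => pdmap f z b j := by
    intro b j
    exact ((hfa b).fderiv_right (m := (⊤ : ℕ∞)) (by simp)).clm_apply contDiff_const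
  have hgd : ∀ b j, Differentiable ℝ fun z => pdmap f z b j :=
    fun b j => (hg b j).differentiable (by simp)
  have hcomp : ∀ j, Differentiable ℝ fun q => pdmap f (φ q) a j :=
    fun j => (hgd a j).comp hφd
  have hterm : ∀ j, Differentiable ℝ fun q => pdmap f (φ q) a j • ψ q j :=
    fun j => (hcomp j).smul (hψdi j)
  -- the key derivative computation
  have key : ∀ v : ℝ × ℝ,
      fderiv ℝ (fun q => ∑ j, pdmap f (φ q) a j • ψ q j) p v =
        ∑ j, ((∑ i, fderiv ℝ (fun q => φ q i) p v * pdN (fun z => pdmap f z a j) (φ p) i) • ψ p j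
          + pdmap f (φ p) a j • fderiv ℝ (fun q => ψ q j) p v) := by
    intro v
    rw [fderiv_fun_sum fun j _ => (hterm j).differentiableAt]
    rw [ContinuousLinearMap.sum_apply]
    refine Finset.sum_congr rfl fun j _ => ?_
    rw [fderiv_fun_smul (hcomp j).differentiableAt (hψdi j).differentiableAt]
    simp only [ContinuousLinearMap.add_apply, ContinuousLinearMap.coe_smul', Pi.smul_apply,
      ContinuousLinearMap.smulRight_apply]
    rw [chain_coord φ hφd _ p ((hgd a j) (φ p)) v, add_comm]
    rfl
  -- decomposition of cl along coordinate gradients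
  have hGi : ∀ (i : Fin n) (s : Spinor), cl (gradc (fun q => φ q i) p) s =
      fderiv ℝ (fun q => φ q i) p (1, 0) • cl (1, 0) s
        + fderiv ℝ (fun q => φ q i) p (0, 1) • cl (0, 1) s := by
    intro i s
    rw [cl_decomp]
    rfl
  -- gradient of the composed map
  have hgrad' : ∀ (b : Fin n') (s : Spinor),
      cl (gradc (fun q => f (φ q) b) p) s =
        ∑ i, pdmap f (φ p) b i • cl (gradc (fun q => φ q i) p) s := by
    intro b s
    have hx : pdx (fun q => f (φ q) b) p
        = ∑ i, fderiv ℝ (fun q => φ q i) p (1, 0) * pdmap f (φ p) b i :=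
      chain_coord φ hφd _ p (hfad b) (1, 0)
    have hy : pdy (fun q => f (φ q) b) p
        = ∑ i, fderiv ℝ (fun q => φ q i) p (0, 1) * pdmap f (φ p) b i :=
      chain_coord φ hφd _ p (hfad b) (0, 1)
    rw [cl_decomp]
    show pdx (fun q => f (φ q) b) p • cl (1, 0) s
        + pdy (fun q => f (φ q) b) p • cl (0, 1) s = _
    rw [hx, hy, Finset.sum_smul, Finset.sum_smul]
    simp only [hGi, smul_add, smul_smul, Finset.sum_add_distrib]
    congr 1 <;>
      exact Finset.sum_congr rfl fun i _ => by rw [mul_comm]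
  have hA : cl (1, 0) (pdx (fun q => ∑ j, pdmap f (φ q) a j • ψ q j) p)
        + cl (0, 1) (pdy (fun q => ∑ j, pdmap f (φ q) a j • ψ q j) p)
      = (∑ j, pdmap f (φ p) a j •
            (cl (1, 0) (pdx (fun q => ψ q j) p) + cl (0, 1) (pdy (fun q => ψ q j) p)))
        + ∑ i, ∑ j, pdN (fun z => pdmap f z a j) (φ p) i •
            cl (gradc (fun q => φ q i) p) (ψ p j) := by
    show cl (1, 0) (fderiv ℝ (fun q => ∑ j, pdmap f (φ q) a j • ψ q j) p (1, 0))
        + cl (0, 1) (fderiv ℝ (fun q => ∑ j, pdmap f (φ q) a j • ψ q j) p (0, 1)) = _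
    rw [key (1, 0), key (0, 1)]
    simp only [cl_sum', cl_add', cl_smul']
    rw [Finset.sum_add_distrib, Finset.sum_add_distrib]
    have hD : (∑ j, (∑ i, fderiv ℝ (fun q => φ q i) p (1, 0)
              * pdN (fun z => pdmap f z a j) (φ p) i) • cl (1, 0) (ψ p j))
          + (∑ j, (∑ i, fderiv ℝ (fun q => φ q i) p (0, 1)
              * pdN (fun z => pdmap f z a j) (φ p) i) • cl (0, 1) (ψ p j))
        = ∑ i, ∑ j, pdN (fun z => pdmap f z a j) (φ p) i •
            cl (gradc (fun q => φ q i) p) (ψ p j) := by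
      simp only [hGi, smul_add, smul_smul, Finset.sum_add_distrib, Finset.sum_smul]
      congr 1 <;>
        · rw [Finset.sum_comm]
          exact Finset.sum_congr rfl fun i _ => Finset.sum_congr rfl fun j _ => by
            rw [mul_comm]
    rw [← hD]
    simp only [smul_add, Finset.sum_add_distrib, pdx, pdy]
    abel
  have hB : (∑ b, ∑ c, Γ' (f (φ p)) a b c •
        cl (gradc (fun q => f (φ q) b) p) (∑ j, pdmap f (φ p) c j • ψ p j))
      = ∑ i, ∑ j, (∑ b, ∑ c, Γ' (f (φ p)) a b c * pdmap f (φ p) b i * pdmap f (φ p) c j) •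
          cl (gradc (fun q => φ q i) p) (ψ p j) := by
    have h1 : ∀ b c : Fin n',
        cl (gradc (fun q => f (φ q) b) p) (∑ j, pdmap f (φ p) c j • ψ p j)
          = ∑ i, ∑ j, (pdmap f (φ p) b i * pdmap f (φ p) c j) •
              cl (gradc (fun q => φ q i) p) (ψ p j) := by
      intro b c
      rw [hgrad' b]
      simp only [cl_sum', cl_smul', Finset.smul_sum, smul_smul]
    simp only [h1, Finset.smul_sum, smul_smul]
    rw [sum4_comm]
    simp only [Finset.sum_smul]
    exact Finset.sum_congr rfl fun i _ => Finset.sum_congr rfl fun j _ =>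
      Finset.sum_congr rfl fun b _ => Finset.sum_congr rfl fun c _ => by rw [mul_assoc]
  have hC : (∑ j, pdmap f (φ p) a j •
        ∑ k, ∑ l, Γ (φ p) j k l • cl (gradc (fun q => φ q k) p) (ψ p l))
      = ∑ i, ∑ j, (∑ k, Γ (φ p) k i j * pdmap f (φ p) a k) •
          cl (gradc (fun q => φ q i) p) (ψ p j) := by
    simp only [Finset.smul_sum, smul_smul]
    rw [sum3_comm]
    simp only [Finset.sum_smul]
    exact Finset.sum_congr rfl fun k _ => Finset.sum_congr rfl fun l _ =>
      Finset.sum_congr rfl fun j _ => by rw [mul_comm]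
  simp only [diracAlong, diracOp, sff]
  rw [hA, hB]
  simp only [smul_add, add_smul, sub_smul, Finset.sum_add_distrib, Finset.sum_sub_distrib]
  rw [hC]
  abel
end
end

section
/- (Finiteness of the blow-up set) Let {(φ_k, ψ_k): M → S^n} be a sequence of smooth Dirac-harmonic maps with uniformly bounded energy E(φ_k,ψ_k) ≤ Λ < ∞. Then the blow-up set S := ∩_{r>0} {x ∈ M : liminf_{k→∞} ∫_{D(x,r)}(|dφ_k|² + |ψ_k|⁴) ≥ ε₀} is a finite set of points, of cardinality at most Λ/ε₀. -/
noncomputable section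

open MeasureTheory Filter

/-- Superadditivity of `liminf` for finite sums of uniformly bounded real sequences. -/
lemma aux_sum_liminf_le {ι : Type*} (T : Finset ι) (a : ι → ℕ → ℝ) (C : ℝ)
    (h0 : ∀ x ∈ T, ∀ k, 0 ≤ a x k) (hC : ∀ x ∈ T, ∀ k, a x k ≤ C) :
    ∑ x ∈ T, liminf (a x) atTop ≤ liminf (fun k => ∑ x ∈ T, a x k) atTop := by
  classical
  induction T using Finset.induction_on with
  | empty => simp
  | @insert x T hx ih =>
    rw [Finset.sum_insert hx]
    have hbu1 : IsBoundedUnder (· ≥ ·) atTop (a x) :=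
      isBoundedUnder_of ⟨0, fun k => h0 x (Finset.mem_insert_self x T) k⟩
    have hbu2 : IsBoundedUnder (· ≤ ·) atTop (a x) :=
      isBoundedUnder_of ⟨C, fun k => hC x (Finset.mem_insert_self x T) k⟩
    have hbv1 : IsBoundedUnder (· ≥ ·) atTop (fun k => ∑ y ∈ T, a y k) :=
      isBoundedUnder_of ⟨0, fun k =>
        Finset.sum_nonneg fun y hy => h0 y (Finset.mem_insert_of_mem hy) k⟩
    have hbv2 : IsBoundedUnder (· ≤ ·) atTop (fun k => ∑ y ∈ T, a y k) :=
      isBoundedUnder_of ⟨(T.card : ℝ) * C, fun k => by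
        calc ∑ y ∈ T, a y k ≤ ∑ _y ∈ T, C :=
              Finset.sum_le_sum fun y hy => hC y (Finset.mem_insert_of_mem hy) k
          _ = (T.card : ℝ) * C := by simp [mul_comm]⟩
    have hih := ih (fun y hy => h0 y (Finset.mem_insert_of_mem hy))
      (fun y hy => hC y (Finset.mem_insert_of_mem hy))
    refine le_trans (add_le_add_right hih _) ?_
    have h := le_liminf_add hbu1 hbu2 hbv1 hbv2.isCoboundedUnder_ge
    have heq : (fun k => ∑ y ∈ insert x T, a y k) = (a x + fun k => ∑ y ∈ T, a y k) :=
      funext fun k => by simp [Finset.sum_insert hx]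
    rw [heq]
    exact h

/-- **Finiteness of the blow-up set.**
`M` is a compact spin Riemann surface with volume measure `μ`, `S^n ⊆ ℝ^{n+1}` the
standard sphere, and `S` the spinor fiber of `ΣM`.  `IsDiracHarmonic φ ψ` expresses that
`(φ,ψ)` is a smooth Dirac-harmonic map (`D̸ψ = 0`, `τ(φ) = R(φ,ψ)`), `eDen φ = |dφ|²` is
the energy density, and `ε₀` is the constant of the ε-regularity theorem (Theorem 3.2).
If `(φ_k, ψ_k)` is a sequence of smooth Dirac-harmonic maps `M → S^n` with uniformly
bounded energy `E(φ_k,ψ_k) = ∫_M (|dφ_k|² + |ψ_k|⁴) ≤ Λ < ∞`, then the blow-up set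
`S := ⋂_{r>0} {x ∈ M : liminf_k ∫_{D(x,r)} (|dφ_k|² + |ψ_k|⁴) ≥ ε₀}`
is a finite set of points, of cardinality at most `Λ/ε₀`. -/
theorem blow_up_set_finite
    {M : Type*} [MetricSpace M] [CompactSpace M] [MeasurableSpace M] [BorelSpace M]
    (μ : Measure M) [IsFiniteMeasure μ]
    {n : ℕ}
    {S : Type*} [NormedAddCommGroup S] [InnerProductSpace ℝ S]
    (IsDiracHarmonic :
      (M → ↥(Metric.sphere (0 : EuclideanSpace ℝ (Fin (n + 1))) 1)) →
        (M → Fin (n + 1) → S) → Prop)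
    (eDen : (M → ↥(Metric.sphere (0 : EuclideanSpace ℝ (Fin (n + 1))) 1)) → M → ℝ)
    (heDenPos : ∀ φ x, 0 ≤ eDen φ x)
    (ε₀ : ℝ) (hε₀ : 0 < ε₀)
    (Λ : ℝ)
    (φk : ℕ → M → ↥(Metric.sphere (0 : EuclideanSpace ℝ (Fin (n + 1))) 1))
    (ψk : ℕ → M → Fin (n + 1) → S)
    (hDH : ∀ k, IsDiracHarmonic (φk k) (ψk k))
    (hInt : ∀ k, Integrable (fun x => eDen (φk k) x + (∑ i, ‖ψk k x i‖ ^ 2) ^ 2) μ)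
    (hE : ∀ k, (∫ x, (eDen (φk k) x + (∑ i, ‖ψk k x i‖ ^ 2) ^ 2) ∂μ) ≤ Λ) :
    letI Sblow : Set M := {x | ∀ r > (0 : ℝ), ε₀ ≤
      liminf (fun k => ∫ y in Metric.ball x r,
        (eDen (φk k) y + (∑ i, ‖ψk k y i‖ ^ 2) ^ 2) ∂μ) atTop}
    Sblow.Finite ∧ (Sblow.ncard : ℝ) ≤ Λ / ε₀ := by
  classical
  set f : ℕ → M → ℝ := fun k x => eDen (φk k) x + (∑ i, ‖ψk k x i‖ ^ 2) ^ 2 with hf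
  have hfpos : ∀ k x, 0 ≤ f k x := fun k x =>
    add_nonneg (heDenPos _ x) (sq_nonneg _)
  set B : Set M := {x | ∀ r > (0 : ℝ), ε₀ ≤
      liminf (fun k => ∫ y in Metric.ball x r, f k y ∂μ) atTop} with hB
  show B.Finite ∧ (B.ncard : ℝ) ≤ Λ / ε₀
  -- set integrals over any set are bounded by `Λ`
  have hballE : ∀ (s : Set M) (k : ℕ), ∫ y in s, f k y ∂μ ≤ Λ := by
    intro s k
    have h1 : ∫ y in s, f k y ∂μ ≤ ∫ y in Set.univ, f k y ∂μ := by
      refine setIntegral_mono_set ((hInt k).integrableOn) ?_ ?_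
      · exact Filter.Eventually.of_forall fun x => hfpos k x
      · exact HasSubset.Subset.eventuallyLE (Set.subset_univ s)
    calc ∫ y in s, f k y ∂μ ≤ ∫ y in Set.univ, f k y ∂μ := h1
      _ = ∫ y, f k y ∂μ := by rw [setIntegral_univ]
      _ ≤ Λ := hE k
  have hεΛ : (0 : ℝ) ≤ Λ := by
    have h0 : (0 : ℝ) ≤ ∫ y, f 0 y ∂μ := integral_nonneg (hfpos 0)
    exact h0.trans (hE 0)
  -- key estimate: any finite subset `T ⊆ B` satisfies `card T * ε₀ ≤ Λ`
  have key : ∀ T : Finset M, ↑T ⊆ B → (T.card : ℝ) * ε₀ ≤ Λ := by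
    intro T hT
    -- choose a radius making the balls around points of `T` pairwise disjoint
    obtain ⟨r, hr, hsep⟩ :
        ∃ r > (0 : ℝ), ∀ x ∈ T, ∀ y ∈ T, x ≠ y → 2 * r ≤ dist x y := by
      by_cases h : T.offDiag.Nonempty
      · refine ⟨T.offDiag.inf' h (fun p => dist p.1 p.2) / 2, ?_, ?_⟩
        · have : 0 < T.offDiag.inf' h (fun p => dist p.1 p.2) := by
            rw [Finset.lt_inf'_iff]
            intro p hp
            exact dist_pos.2 (Finset.mem_offDiag.1 hp).2.2
          linarith
        · intro x hx y hy hxy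
          have hmem : (x, y) ∈ T.offDiag := Finset.mem_offDiag.2 ⟨hx, hy, hxy⟩
          have := Finset.inf'_le (fun p => dist p.1 p.2) hmem
          linarith
      · refine ⟨1, one_pos, fun x hx y hy hxy => absurd ?_ h⟩
        exact ⟨(x, y), Finset.mem_offDiag.2 ⟨hx, hy, hxy⟩⟩
    set a : M → ℕ → ℝ := fun x k => ∫ y in Metric.ball x r, f k y ∂μ with ha
    have h0 : ∀ x ∈ T, ∀ k, 0 ≤ a x k := fun x _ k =>
      setIntegral_nonneg measurableSet_ball fun y _ => hfpos k y
    have hCb : ∀ x ∈ T, ∀ k, a x k ≤ Λ := fun x _ k => hballE _ k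
    -- pairwise disjointness of the balls
    have hdisj : Set.Pairwise (↑T : Set M) (fun x y => Disjoint (Metric.ball x r) (Metric.ball y r)) := by
      intro x hx y hy hxy
      have hd : r + r ≤ dist x y := by
        have := hsep x hx y hy hxy; linarith
      exact Metric.ball_disjoint_ball hd
    -- for every `k` the sum of the ball integrals is at most `Λ`
    have hsum : ∀ k, ∑ x ∈ T, a x k ≤ Λ := by
      intro k
      have heq : ∫ y in ⋃ x ∈ T, Metric.ball x r, f k y ∂μ = ∑ x ∈ T, a x k :=
        integral_biUnion_finset T (fun _ _ => measurableSet_ball) hdisj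
          (fun _ _ => (hInt k).integrableOn)
      rw [← heq]; exact hballE _ k
    -- combine
    have hliminf : ∀ x ∈ T, ε₀ ≤ liminf (a x) atTop := fun x hx => hT hx r hr
    have h1 : (T.card : ℝ) * ε₀ ≤ ∑ x ∈ T, liminf (a x) atTop := by
      calc (T.card : ℝ) * ε₀ = ∑ _x ∈ T, ε₀ := by simp [mul_comm]
        _ ≤ ∑ x ∈ T, liminf (a x) atTop := Finset.sum_le_sum hliminf
    have h2 : ∑ x ∈ T, liminf (a x) atTop ≤ liminf (fun k => ∑ x ∈ T, a x k) atTop :=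
      aux_sum_liminf_le T a Λ h0 hCb
    have h3 : liminf (fun k => ∑ x ∈ T, a x k) atTop ≤ Λ := by
      refine liminf_le_of_le (isBoundedUnder_of ⟨0, fun k =>
        Finset.sum_nonneg fun x hx => h0 x hx k⟩) ?_
      intro b hb
      obtain ⟨k, hk⟩ := hb.exists
      exact hk.trans (hsum k)
    linarith
  -- finiteness
  have hfin : B.Finite := by
    by_contra hinf
    obtain ⟨T, hTB, hTcard⟩ :=
      Set.Infinite.exists_subset_card_eq hinf (⌈Λ / ε₀⌉₊ + 1)
    have h1 := key T hTB
    have h2 : (T.card : ℝ) ≤ Λ / ε₀ := (le_div_iff₀ hε₀).2 h1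
    have h3 : Λ / ε₀ ≤ (⌈Λ / ε₀⌉₊ : ℝ) := Nat.le_ceil _
    rw [hTcard] at h2
    push_cast at h2
    linarith
  refine ⟨hfin, ?_⟩
  have hsub : ↑hfin.toFinset ⊆ B := by simp
  have h1 := key hfin.toFinset hsub
  have h2 : B.ncard = hfin.toFinset.card := Set.ncard_eq_toFinset_card B hfin
  rw [h2]
  exact (le_div_iff₀ hε₀).2 h1
end
end
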